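/- arXiv:2507.04168 — 3 statements merged into one kernel-verified Lean document; each statement's English description precedes it below -/
import Mathlib

section
/- With the improper flat prior on μ ∈ ℝ and the asymmetric Laplace likelihood, the posterior is proper: for any data Y₁,…,Yₙ with n ≥ 1, the integral ∫_ℝ exp{−λ⁻¹ ∑ᵢ ρ_τ(Yᵢ − μ)} dμ is finite and strictly positive. -/
open MeasureTheory Set Real

/-- The check (pinball) loss `ρ_τ(x) = x·(τ − 1{x<0})`. -/
noncomputable def rho (τ x : ℝ) : ℝ := x * (τ - if x < 0 then 1 else 0)

lemma rho_eq (τ x : ℝ) : rho τ x = τ * x - min x 0 := by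
  unfold rho
  split_ifs with h
  · rw [min_eq_left h.le]; ring
  · rw [min_eq_right (not_lt.mp h)]; ring

lemma rho_nonneg {τ : ℝ} (hτ : τ ∈ Ioo (0:ℝ) 1) (x : ℝ) : 0 ≤ rho τ x := by
  unfold rho
  rcases lt_or_ge x 0 with h | h
  · simp only [h, if_pos]
    nlinarith [hτ.2]
  · simp only [not_lt.mpr h, if_neg, if_false]
    have : ¬ x < 0 := not_lt.mpr h
    simp only [this, if_false, sub_zero]
    exact mul_nonneg h hτ.1.le

lemma rho_ge {τ : ℝ} (hτ : τ ∈ Ioo (0:ℝ) 1) (x : ℝ) :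
    min τ (1 - τ) * |x| ≤ rho τ x := by
  unfold rho
  rcases lt_or_ge x 0 with h | h
  · simp only [h, if_pos, abs_of_neg h]
    have h1 : min τ (1 - τ) ≤ 1 - τ := min_le_right _ _
    nlinarith
  · have : ¬ x < 0 := not_lt.mpr h
    simp only [this, if_false, sub_zero, abs_of_nonneg h]
    have h1 : min τ (1 - τ) ≤ τ := min_le_left _ _
    nlinarith

lemma integrable_exp_neg_mul_abs {b : ℝ} (hb : 0 < b) :
    Integrable (fun x : ℝ => Real.exp (-b * |x|)) := by
  have hIoi : IntegrableOn (fun x : ℝ => Real.exp (-b * |x|)) (Ioi 0) := by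
    refine (exp_neg_integrableOn_Ioi 0 hb).congr_fun (fun x hx => ?_) measurableSet_Ioi
    rw [abs_of_pos hx]
  have hIic : IntegrableOn (fun x : ℝ => Real.exp (-b * |x|)) (Iic 0) := by
    rw [← Measure.map_neg_eq_self (volume : Measure ℝ)]
    have m : MeasurableEmbedding fun x : ℝ => -x := (Homeomorph.neg ℝ).measurableEmbedding
    rw [m.integrableOn_map_iff]
    simp_rw [Function.comp_def, abs_neg, neg_preimage, neg_Iic, neg_zero]
    exact Iff.mpr integrableOn_Ici_iff_integrableOn_Ioi hIoi
  have := hIic.union hIoi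
  rwa [Iic_union_Ioi, integrableOn_univ] at this

/-- With the flat improper prior on μ and the asymmetric Laplace likelihood,
the posterior is proper: the normalizing integral is finite and positive. -/
theorem flat_prior_ald_posterior_proper
    (n : ℕ) (hn : 1 ≤ n) (Y : Fin n → ℝ) (lam τ : ℝ) (hlam : 0 < lam)
    (hτ : τ ∈ Ioo (0:ℝ) 1) :
    Integrable (fun μ : ℝ => Real.exp (-lam⁻¹ * ∑ i, rho τ (Y i - μ))) ∧
    0 < ∫ μ : ℝ, Real.exp (-lam⁻¹ * ∑ i, rho τ (Y i - μ)) := by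
  set c : ℝ := min τ (1 - τ) with hc
  have hcpos : 0 < c := lt_min hτ.1 (by linarith [hτ.2])
  set b : ℝ := lam⁻¹ * c with hb
  have hbpos : 0 < b := mul_pos (inv_pos.mpr hlam) hcpos
  have i0 : Fin n := ⟨0, hn⟩
  -- continuity
  have hcont : Continuous (fun μ : ℝ => Real.exp (-lam⁻¹ * ∑ i, rho τ (Y i - μ))) := by
    apply Real.continuous_exp.comp
    apply Continuous.mul continuous_const
    apply continuous_finset_sum
    intro i _
    simp_rw [rho_eq]
    fun_prop
  -- key pointwise bound
  have hbound : ∀ μ : ℝ,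
      ‖Real.exp (-lam⁻¹ * ∑ i, rho τ (Y i - μ))‖ ≤ Real.exp (-b * |μ - Y i0|) := by
    intro μ
    rw [Real.norm_eq_abs, abs_of_pos (Real.exp_pos _), Real.exp_le_exp]
    have hsum : rho τ (Y i0 - μ) ≤ ∑ i, rho τ (Y i - μ) :=
      Finset.single_le_sum (f := fun i => rho τ (Y i - μ)) (fun i _ => rho_nonneg hτ _) (Finset.mem_univ i0)
    have hge : c * |Y i0 - μ| ≤ rho τ (Y i0 - μ) := rho_ge hτ _
    have habs : |μ - Y i0| = |Y i0 - μ| := abs_sub_comm _ _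
    rw [habs]
    have hlaminv : 0 < lam⁻¹ := inv_pos.mpr hlam
    rw [hb]
    nlinarith [mul_le_mul_of_nonneg_left hsum hlaminv.le, mul_le_mul_of_nonneg_left hge hlaminv.le]
  have hInt : Integrable (fun μ : ℝ => Real.exp (-lam⁻¹ * ∑ i, rho τ (Y i - μ))) := by
    refine Integrable.mono' ?_ hcont.aestronglyMeasurable (Filter.Eventually.of_forall hbound)
    have := (integrable_exp_neg_mul_abs hbpos).comp_sub_right (Y i0)
    simpa using this
  refine ⟨hInt, ?_⟩
  rw [integral_pos_iff_support_of_nonneg (fun μ => (Real.exp_pos _).le) hInt]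
  have : Function.support (fun μ : ℝ => Real.exp (-lam⁻¹ * ∑ i, rho τ (Y i - μ))) = Set.univ := by
    ext μ; simp [Function.mem_support, (Real.exp_pos _).ne']
  rw [this]
  simp
end

section
/- For n data points with order statistics Y₍₁₎ ≤ … ≤ Y₍ₙ₎ and τ ∈ (0,1) with k/n ≠ τ for all k, the posterior mean under the flat prior and Laplace likelihood equals (wᵀψ)/(wᵀφ), where w_k = exp(−λ⁻¹(τ−1)∑_{i≤k}Y₍ᵢ₎ − λ⁻¹τ∑_{i>k}Y₍ᵢ₎), c_k = λ⁻¹(k−nτ), ψ_k = c_k⁻²[(c_k Y₍ₖ₎+1)e^{−c_k Y₍ₖ₎} − (c_k Y₍ₖ₊₁₎+1)e^{−c_k Y₍ₖ₊₁₎}], and φ_k = c_k⁻¹[e^{−c_k Y₍ₖ₎} − e^{−c_k Y₍ₖ₊₁₎}] (with Y₍₀₎ = −∞, Y₍ₙ₊₁₎ = +∞, boundary terms interpreted as the corresponding improper integrals). -/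
open MeasureTheory Set Real

/-- `w_k = exp(−λ⁻¹(τ−1)∑_{i≤k}Y_(i) − λ⁻¹τ∑_{i>k}Y_(i))` (0-indexed data). -/
noncomputable def wgt (lam τ : ℝ) (n : ℕ) (Y : ℕ → ℝ) (k : ℕ) : ℝ :=
  Real.exp (-lam⁻¹ * (τ - 1) * (∑ i ∈ Finset.range k, Y i)
    - lam⁻¹ * τ * (∑ i ∈ Finset.Ico k n, Y i))

/-- `c_k = λ⁻¹(k − nτ)`. -/
noncomputable def cexp (lam τ : ℝ) (n k : ℕ) : ℝ := lam⁻¹ * ((k : ℝ) - n * τ)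

lemma rho_nonpos (τ : ℝ) {x : ℝ} (h : x ≤ 0) : rho τ x = x * (τ - 1) := by
  unfold rho
  rcases lt_or_eq_of_le h with h' | h'
  · rw [if_pos h']
  · subst h'; simp

lemma rho_nonneg' (τ : ℝ) {x : ℝ} (h : 0 ≤ x) : rho τ x = x * τ := by
  unfold rho
  rw [if_neg (not_lt.mpr h)]; ring

lemma key_exp (lam τ : ℝ) {n k : ℕ} (hk : k ≤ n) (Y : ℕ → ℝ) {μ : ℝ}
    (h1 : ∀ i, i < k → Y i ≤ μ) (h2 : ∀ i, k ≤ i → i < n → μ ≤ Y i) :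
    Real.exp (-lam⁻¹ * ∑ i ∈ Finset.range n, rho τ (Y i - μ))
      = wgt lam τ n Y k * Real.exp (-(cexp lam τ n k) * μ) := by
  rw [wgt, cexp, ← Real.exp_add]
  congr 1
  have hsplit : ∑ i ∈ Finset.range n, rho τ (Y i - μ)
      = ∑ i ∈ Finset.range k, (Y i - μ) * (τ - 1) + ∑ i ∈ Finset.Ico k n, (Y i - μ) * τ := by
    rw [← Finset.sum_range_add_sum_Ico _ hk]
    congr 1
    · refine Finset.sum_congr rfl fun i hi => rho_nonpos τ ?_
      have := h1 i (Finset.mem_range.mp hi); linarith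
    · refine Finset.sum_congr rfl fun i hi => rho_nonneg' τ ?_
      obtain ⟨h, h'⟩ := Finset.mem_Ico.mp hi
      have := h2 i h h'; linarith
  have e1 : ∑ i ∈ Finset.range k, (Y i - μ) * (τ - 1)
      = (∑ i ∈ Finset.range k, Y i) * (τ - 1) - (k : ℝ) * μ * (τ - 1) := by
    rw [← Finset.sum_mul, Finset.sum_sub_distrib, Finset.sum_const, Finset.card_range,
      nsmul_eq_mul]
    ring
  have e2 : ∑ i ∈ Finset.Ico k n, (Y i - μ) * τ
      = (∑ i ∈ Finset.Ico k n, Y i) * τ - ((n : ℝ) - (k : ℝ)) * μ * τ := by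
    rw [← Finset.sum_mul, Finset.sum_sub_distrib, Finset.sum_const, Nat.card_Ico, nsmul_eq_mul]
    push_cast [Nat.cast_sub hk]
    ring
  rw [hsplit, e1, e2]
  ring

lemma integral_Ioc_exp {c : ℝ} (hc : c ≠ 0) {a b : ℝ} (hab : a ≤ b) :
    ∫ μ in Ioc a b, Real.exp (-c * μ) = (Real.exp (-c * a) - Real.exp (-c * b)) / c := by
  rw [← intervalIntegral.integral_of_le hab]
  have h : ∀ x ∈ Set.uIcc a b, HasDerivAt (fun μ : ℝ => -Real.exp (-c * μ) / c)
      (Real.exp (-c * x)) x := by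
    intro x _
    have h1 : HasDerivAt (fun μ : ℝ => -c * μ) (-c) x := by
      simpa using (hasDerivAt_id x).const_mul (-c)
    have h2 : HasDerivAt (fun μ : ℝ => -Real.exp (-c * μ) / c) (-(Real.exp (-c * x) * -c) / c) x :=
      h1.exp.neg.div_const c
    convert h2 using 1
    field_simp
  rw [intervalIntegral.integral_eq_sub_of_hasDerivAt h
    ((Real.continuous_exp.comp (continuous_const.mul continuous_id)).intervalIntegrable a b)]
  field_simp
  ring

lemma integral_Ioc_mul_exp {c : ℝ} (hc : c ≠ 0) {a b : ℝ} (hab : a ≤ b) :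
    ∫ μ in Ioc a b, μ * Real.exp (-c * μ)
      = ((c * a + 1) * Real.exp (-c * a) - (c * b + 1) * Real.exp (-c * b)) / c ^ 2 := by
  rw [← intervalIntegral.integral_of_le hab]
  have h : ∀ x ∈ Set.uIcc a b, HasDerivAt (fun μ : ℝ => -((c * μ + 1) * Real.exp (-c * μ)) / c ^ 2)
      (x * Real.exp (-c * x)) x := by
    intro x _
    have h1 : HasDerivAt (fun μ : ℝ => -c * μ) (-c) x := by
      simpa using (hasDerivAt_id x).const_mul (-c)
    have hg : HasDerivAt (fun μ : ℝ => c * μ + 1) c x := by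
      simpa using ((hasDerivAt_id x).const_mul c).add_const 1
    have h2 : HasDerivAt (fun μ : ℝ => -((c * μ + 1) * Real.exp (-c * μ)) / c ^ 2)
        (-(c * Real.exp (-c * x) + (c * x + 1) * (Real.exp (-c * x) * -c)) / c ^ 2) x :=
      (hg.mul h1.exp).neg.div_const (c ^ 2)
    convert h2 using 1
    field_simp
    ring
  rw [intervalIntegral.integral_eq_sub_of_hasDerivAt h
    ((continuous_id.mul (Real.continuous_exp.comp (continuous_const.mul continuous_id))).intervalIntegrable a b)]
  field_simp
  ring

lemma intOn_mul_exp_Ioi {b : ℝ} (hb : 0 < b) (a : ℝ) :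
    IntegrableOn (fun x : ℝ => x * Real.exp (-b * x)) (Ioi a) := by
  refine integrable_of_isBigO_exp_neg (half_pos hb) (Continuous.continuousOn (by fun_prop)) ?_
  apply Asymptotics.IsLittleO.isBigO
  rw [Asymptotics.isLittleO_iff_tendsto (fun x hx => absurd hx (Real.exp_ne_zero _))]
  have hkey : ∀ x : ℝ, x * Real.exp (-b * x) / Real.exp (-(b / 2) * x)
      = x * Real.exp (-(b / 2) * x) := by
    intro x
    rw [mul_div_assoc, ← Real.exp_sub]
    ring_nf
  simp only [hkey]
  have h2 : Filter.Tendsto (fun x : ℝ => (b / 2) * x) Filter.atTop Filter.atTop :=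
    Filter.Tendsto.const_mul_atTop (half_pos hb) Filter.tendsto_id
  have h3 := (tendsto_pow_mul_exp_neg_atTop_nhds_zero 1).comp h2
  have h4 := h3.const_mul (2 / b)
  rw [mul_zero] at h4
  refine h4.congr fun x => ?_
  simp only [Function.comp, pow_one]
  rw [show -(b / 2 * x) = -(b / 2) * x by ring]
  rw [← mul_assoc, show 2 / b * (b / 2 * x) = x by field_simp]

lemma intOn_Iic_reflect {g : ℝ → ℝ} {c : ℝ}
    (h : IntegrableOn (fun x => g (-x)) (Ioi (-c))) : IntegrableOn g (Iic c) := by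
  rw [← Measure.map_neg_eq_self (volume : Measure ℝ)]
  have m : MeasurableEmbedding fun x : ℝ => -x := (Homeomorph.neg ℝ).measurableEmbedding
  rw [m.integrableOn_map_iff]
  simp_rw [Function.comp_def, neg_preimage, neg_Iic]
  exact (integrableOn_Ici_iff_integrableOn_Ioi).mpr h

lemma intOn_exp_Iic {c : ℝ} (hc : c < 0) (a : ℝ) :
    IntegrableOn (fun x : ℝ => Real.exp (-c * x)) (Iic a) := by
  apply intOn_Iic_reflect
  have h := exp_neg_integrableOn_Ioi (-a) (neg_pos.mpr hc)
  exact h.congr_fun (fun x _ => by rw [show -c * -x = -(-c) * x by ring]) measurableSet_Ioi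

lemma intOn_mul_exp_Iic {c : ℝ} (hc : c < 0) (a : ℝ) :
    IntegrableOn (fun x : ℝ => x * Real.exp (-c * x)) (Iic a) := by
  apply intOn_Iic_reflect
  refine IntegrableOn.congr_fun ((intOn_mul_exp_Ioi (neg_pos.mpr hc) (-a)).neg)
    (fun x _ => ?_) measurableSet_Ioi
  simp only [Pi.neg_apply]
  rw [show -c * -x = -(-c) * x by ring]
  ring

/-- `ψ_k`, with boundary terms (`k = 0`, `k = n`) interpreted as the
corresponding improper integrals. -/
noncomputable def psi (lam τ : ℝ) (n : ℕ) (Y : ℕ → ℝ) (k : ℕ) : ℝ :=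
  if k = 0 then ∫ μ in Iic (Y 0), μ * Real.exp (-(cexp lam τ n 0) * μ)
  else if k = n then ∫ μ in Ici (Y (n - 1)), μ * Real.exp (-(cexp lam τ n n) * μ)
  else ((cexp lam τ n k * Y (k - 1) + 1) * Real.exp (-(cexp lam τ n k) * Y (k - 1))
        - (cexp lam τ n k * Y k + 1) * Real.exp (-(cexp lam τ n k) * Y k))
       / (cexp lam τ n k) ^ 2

/-- `φ_k`, with boundary terms interpreted as improper integrals. -/
noncomputable def phi (lam τ : ℝ) (n : ℕ) (Y : ℕ → ℝ) (k : ℕ) : ℝ :=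
  if k = 0 then ∫ μ in Iic (Y 0), Real.exp (-(cexp lam τ n 0) * μ)
  else if k = n then ∫ μ in Ici (Y (n - 1)), Real.exp (-(cexp lam τ n n) * μ)
  else (Real.exp (-(cexp lam τ n k) * Y (k - 1))
        - Real.exp (-(cexp lam τ n k) * Y k)) / (cexp lam τ n k)

lemma psi_zero (lam τ : ℝ) (n : ℕ) (Y : ℕ → ℝ) :
    psi lam τ n Y 0 = ∫ μ in Iic (Y 0), μ * Real.exp (-(cexp lam τ n 0) * μ) := rfl

lemma psi_top (lam τ : ℝ) {n : ℕ} (hn : 1 ≤ n) (Y : ℕ → ℝ) :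
    psi lam τ n Y n = ∫ μ in Ici (Y (n - 1)), μ * Real.exp (-(cexp lam τ n n) * μ) := by
  unfold psi
  rw [if_neg (by omega), if_pos rfl]

lemma psi_mid (lam τ : ℝ) {n k : ℕ} (h0 : k ≠ 0) (hn : k ≠ n) (Y : ℕ → ℝ) :
    psi lam τ n Y k
      = ((cexp lam τ n k * Y (k - 1) + 1) * Real.exp (-(cexp lam τ n k) * Y (k - 1))
        - (cexp lam τ n k * Y k + 1) * Real.exp (-(cexp lam τ n k) * Y k))
       / (cexp lam τ n k) ^ 2 := by
  unfold psi
  rw [if_neg h0, if_neg hn]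

lemma phi_zero (lam τ : ℝ) (n : ℕ) (Y : ℕ → ℝ) :
    phi lam τ n Y 0 = ∫ μ in Iic (Y 0), Real.exp (-(cexp lam τ n 0) * μ) := rfl

lemma phi_top (lam τ : ℝ) {n : ℕ} (hn : 1 ≤ n) (Y : ℕ → ℝ) :
    phi lam τ n Y n = ∫ μ in Ici (Y (n - 1)), Real.exp (-(cexp lam τ n n) * μ) := by
  unfold phi
  rw [if_neg (by omega), if_pos rfl]

lemma phi_mid (lam τ : ℝ) {n k : ℕ} (h0 : k ≠ 0) (hn : k ≠ n) (Y : ℕ → ℝ) :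
    phi lam τ n Y k
      = (Real.exp (-(cexp lam τ n k) * Y (k - 1))
        - Real.exp (-(cexp lam τ n k) * Y k)) / (cexp lam τ n k) := by
  unfold phi
  rw [if_neg h0, if_neg hn]

/-- Closed form of the flat-prior posterior mean under the asymmetric Laplace
likelihood as the ratio of inner products `(wᵀψ)/(wᵀφ)`.  The data
`Y 0 ≤ Y 1 ≤ … ≤ Y (n-1)` are the order statistics (0-indexed). -/
theorem posterior_mean_closed_form
    (n : ℕ) (hn : 1 ≤ n) (Y : ℕ → ℝ)
    (hY : ∀ i j : ℕ, i ≤ j → j < n → Y i ≤ Y j)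
    (lam τ : ℝ) (hlam : 0 < lam) (hτ : τ ∈ Ioo (0:ℝ) 1)
    (hkτ : ∀ k : ℕ, k ≤ n → (k : ℝ) / n ≠ τ) :
    (∫ μ : ℝ, μ * Real.exp (-lam⁻¹ * ∑ i ∈ Finset.range n, rho τ (Y i - μ))) /
      (∫ μ : ℝ, Real.exp (-lam⁻¹ * ∑ i ∈ Finset.range n, rho τ (Y i - μ)))
    = (∑ k ∈ Finset.range (n + 1), wgt lam τ n Y k * psi lam τ n Y k) /
      (∑ k ∈ Finset.range (n + 1), wgt lam τ n Y k * phi lam τ n Y k) := by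
  obtain ⟨hτ0, hτ1⟩ := hτ
  have hlaminv : (0:ℝ) < lam⁻¹ := inv_pos.mpr hlam
  have hnR : (0:ℝ) < (n:ℝ) := by exact_mod_cast hn
  have hck : ∀ k : ℕ, k ≤ n → cexp lam τ n k ≠ 0 := by
    intro k hk h0
    apply hkτ k hk
    rw [cexp] at h0
    rcases mul_eq_zero.mp h0 with h | h
    · exact absurd h (by positivity)
    · rw [div_eq_iff hnR.ne']
      have := sub_eq_zero.mp h
      linarith
  have hc0 : cexp lam τ n 0 < 0 := by
    rw [cexp]
    push_cast
    have h1 : (0:ℝ) < (n:ℝ) * τ := by positivity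
    nlinarith
  have hcn : 0 < cexp lam τ n n := by
    rw [cexp]
    have h1 : (0:ℝ) < (n:ℝ) * (1 - τ) := mul_pos hnR (by linarith)
    nlinarith
  have hm : n - 1 < n := by omega
  have hY0m : Y 0 ≤ Y (n - 1) := hY 0 (n - 1) (Nat.zero_le _) hm
  have hfc : Continuous (fun μ : ℝ =>
      Real.exp (-lam⁻¹ * ∑ i ∈ Finset.range n, rho τ (Y i - μ))) := by
    simp only [rho_eq]
    fun_prop
  have hEq0 : ∀ μ ∈ Iic (Y 0),
      Real.exp (-lam⁻¹ * ∑ i ∈ Finset.range n, rho τ (Y i - μ))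
        = wgt lam τ n Y 0 * Real.exp (-(cexp lam τ n 0) * μ) := by
    intro μ hμ
    exact key_exp lam τ (Nat.zero_le n) Y (fun i hi => absurd hi (Nat.not_lt_zero i))
      (fun i _ hi => le_trans hμ (hY 0 i (Nat.zero_le i) hi))
  have hEqn : ∀ μ ∈ Ioi (Y (n - 1)),
      Real.exp (-lam⁻¹ * ∑ i ∈ Finset.range n, rho τ (Y i - μ))
        = wgt lam τ n Y n * Real.exp (-(cexp lam τ n n) * μ) := by
    intro μ hμ
    exact key_exp lam τ le_rfl Y
      (fun i hi => le_trans (hY i (n - 1) (by omega) hm) (le_of_lt hμ))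
      (fun i hi hi' => absurd hi' (by omega))
  have hEqk : ∀ k, 1 ≤ k → k < n → ∀ μ ∈ Ioc (Y (k - 1)) (Y k),
      Real.exp (-lam⁻¹ * ∑ i ∈ Finset.range n, rho τ (Y i - μ))
        = wgt lam τ n Y k * Real.exp (-(cexp lam τ n k) * μ) := by
    intro k hk1 hkn μ hμ
    refine key_exp lam τ hkn.le Y (fun i hi => ?_) (fun i hik hin => ?_)
    · exact le_trans (hY i (k - 1) (by omega) (by omega)) hμ.1.le
    · exact le_trans hμ.2 (hY k i hik hin)
  have hcover : Iic (Y 0) ∪ (Ioc (Y 0) (Y (n - 1)) ∪ Ioi (Y (n - 1))) = univ := by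
    rw [Ioc_union_Ioi_eq_Ioi hY0m, Iic_union_Ioi]
  have hintf : Integrable (fun μ : ℝ =>
      Real.exp (-lam⁻¹ * ∑ i ∈ Finset.range n, rho τ (Y i - μ))) := by
    rw [← integrableOn_univ, ← hcover]
    refine IntegrableOn.union ?_ (IntegrableOn.union ?_ ?_)
    · exact IntegrableOn.congr_fun ((intOn_exp_Iic hc0 (Y 0)).const_mul (wgt lam τ n Y 0))
        (fun μ hμ => (hEq0 μ hμ).symm) measurableSet_Iic
    · exact hfc.integrableOn_Ioc
    · exact IntegrableOn.congr_fun
        ((exp_neg_integrableOn_Ioi (Y (n - 1)) hcn).const_mul (wgt lam τ n Y n))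
        (fun μ hμ => (hEqn μ hμ).symm) measurableSet_Ioi
  have hintF : Integrable (fun μ : ℝ =>
      μ * Real.exp (-lam⁻¹ * ∑ i ∈ Finset.range n, rho τ (Y i - μ))) := by
    rw [← integrableOn_univ, ← hcover]
    refine IntegrableOn.union ?_ (IntegrableOn.union ?_ ?_)
    · refine IntegrableOn.congr_fun ((intOn_mul_exp_Iic hc0 (Y 0)).const_mul (wgt lam τ n Y 0))
        (fun μ hμ => ?_) measurableSet_Iic
      rw [hEq0 μ hμ]; ring
    · exact (continuous_id.mul hfc).integrableOn_Ioc
    · refine IntegrableOn.congr_fun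
        ((intOn_mul_exp_Ioi hcn (Y (n - 1))).const_mul (wgt lam τ n Y n))
        (fun μ hμ => ?_) measurableSet_Ioi
      rw [hEqn μ hμ]; ring
  have decomp : ∀ g : ℝ → ℝ, Integrable g →
      ∫ x, g x = ((∫ x in Iic (Y 0), g x)
        + ∑ k ∈ Finset.Ico 1 n, ∫ x in Ioc (Y (k - 1)) (Y k), g x)
        + ∫ x in Ioi (Y (n - 1)), g x := by
    intro g hg
    have step : ∀ m, m < n → ∫ x in Iic (Y m), g x
        = (∫ x in Iic (Y 0), g x)
          + ∑ k ∈ Finset.Ico 1 (m + 1), ∫ x in Ioc (Y (k - 1)) (Y k), g x := by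
      intro m
      induction m with
      | zero => intro _; simp
      | succ p ih =>
        intro hpn
        have hYle : Y p ≤ Y (p + 1) := hY p (p + 1) (by omega) hpn
        rw [← Iic_union_Ioc_eq_Iic hYle,
          setIntegral_union (Iic_disjoint_Ioc le_rfl) measurableSet_Ioc
            hg.integrableOn hg.integrableOn,
          ih (by omega),
          Finset.sum_Ico_succ_top (Nat.succ_le_succ (Nat.zero_le p))
            (fun k => ∫ x in Ioc (Y (k - 1)) (Y k), g x)]
        simp only [Nat.succ_sub_one, Nat.succ_eq_add_one]
        ring
    rw [← intervalIntegral.integral_Iic_add_Ioi (b := Y (n - 1)) hg.integrableOn hg.integrableOn,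
      step (n - 1) hm, Nat.sub_add_cancel hn]
  have hsplitsum : ∀ T : ℕ → ℝ, ∑ k ∈ Finset.range (n + 1), T k
      = (T 0 + ∑ k ∈ Finset.Ico 1 n, T k) + T n := by
    intro T
    rw [Finset.range_eq_Ico, Finset.sum_eq_sum_Ico_succ_bot (by omega : 0 < n + 1),
      Finset.sum_Ico_succ_top (by omega : 1 ≤ n)]
    ring
  have hnum : (∫ μ : ℝ, μ * Real.exp (-lam⁻¹ * ∑ i ∈ Finset.range n, rho τ (Y i - μ)))
      = ∑ k ∈ Finset.range (n + 1), wgt lam τ n Y k * psi lam τ n Y k := by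
    rw [decomp _ hintF, hsplitsum]
    congr 1
    congr 1
    · rw [setIntegral_congr_fun (g := fun μ =>
          wgt lam τ n Y 0 * (μ * Real.exp (-(cexp lam τ n 0) * μ))) measurableSet_Iic
          (fun μ hμ => by rw [hEq0 μ hμ]; ring),
        integral_const_mul, psi_zero]
    · refine Finset.sum_congr rfl fun k hk => ?_
      obtain ⟨hk1, hkn⟩ := Finset.mem_Ico.mp hk
      have hYk : Y (k - 1) ≤ Y k := hY (k - 1) k (by omega) hkn
      rw [setIntegral_congr_fun (g := fun μ =>
          wgt lam τ n Y k * (μ * Real.exp (-(cexp lam τ n k) * μ))) measurableSet_Ioc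
          (fun μ hμ => by rw [hEqk k hk1 hkn μ hμ]; ring),
        integral_const_mul, integral_Ioc_mul_exp (hck k hkn.le) hYk,
        psi_mid lam τ (by omega) (by omega) Y]
    · rw [setIntegral_congr_fun (g := fun μ =>
          wgt lam τ n Y n * (μ * Real.exp (-(cexp lam τ n n) * μ))) measurableSet_Ioi
          (fun μ hμ => by rw [hEqn μ hμ]; ring),
        integral_const_mul, psi_top lam τ hn Y, integral_Ici_eq_integral_Ioi]
  have hden : (∫ μ : ℝ, Real.exp (-lam⁻¹ * ∑ i ∈ Finset.range n, rho τ (Y i - μ)))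
      = ∑ k ∈ Finset.range (n + 1), wgt lam τ n Y k * phi lam τ n Y k := by
    rw [decomp _ hintf, hsplitsum]
    congr 1
    congr 1
    · rw [setIntegral_congr_fun (g := fun μ =>
          wgt lam τ n Y 0 * Real.exp (-(cexp lam τ n 0) * μ)) measurableSet_Iic
          (fun μ hμ => hEq0 μ hμ),
        integral_const_mul, phi_zero]
    · refine Finset.sum_congr rfl fun k hk => ?_
      obtain ⟨hk1, hkn⟩ := Finset.mem_Ico.mp hk
      have hYk : Y (k - 1) ≤ Y k := hY (k - 1) k (by omega) hkn
      rw [setIntegral_congr_fun (g := fun μ =>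
          wgt lam τ n Y k * Real.exp (-(cexp lam τ n k) * μ)) measurableSet_Ioc
          (fun μ hμ => hEqk k hk1 hkn μ hμ),
        integral_const_mul, integral_Ioc_exp (hck k hkn.le) hYk,
        phi_mid lam τ (by omega) (by omega) Y]
    · rw [setIntegral_congr_fun (g := fun μ =>
          wgt lam τ n Y n * Real.exp (-(cexp lam τ n n) * μ)) measurableSet_Ioi
          (fun μ hμ => hEqn μ hμ),
        integral_const_mul, phi_top lam τ hn Y, integral_Ici_eq_integral_Ioi]
  rw [hnum, hden]
end

section
/- For the median (τ = 1/2), as λ → ∞ (learning rate λ⁻¹ → 0), the posterior mean under the flat improper prior converges to the sample mean: q̂^{PM}_{0.5,λ} → (1/n)∑ᵢ Yᵢ. -/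
open MeasureTheory Set Real Filter

set_option maxHeartbeats 1000000

lemma rho_half (x : ℝ) : rho (1/2) x = |x| / 2 := by
  unfold rho
  rcases lt_or_ge x 0 with h | h
  · rw [if_pos h, abs_of_neg h]; ring
  · rw [if_neg (not_lt.2 h), abs_of_nonneg h]; ring

lemma t_exp_le_one {t : ℝ} (ht : 0 ≤ t) : t * Real.exp (-t) ≤ 1 := by
  have h1 : t ≤ Real.exp t := by linarith [Real.add_one_le_exp t]
  calc t * Real.exp (-t) ≤ Real.exp t * Real.exp (-t) :=
        mul_le_mul_of_nonneg_right h1 (Real.exp_pos _).le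
    _ = 1 := by rw [← Real.exp_add]; simp

lemma mul_exp_neg_le {a t : ℝ} (ha : 0 < a) (ht : 0 ≤ t) :
    t * Real.exp (-(a * t)) ≤ 1/a := by
  have h := t_exp_le_one (t := a*t) (by positivity)
  rw [le_div_iff₀ ha]
  calc t * Real.exp (-(a*t)) * a = a * t * Real.exp (-(a*t)) := by ring
    _ ≤ 1 := h

lemma tendsto_aux_exp {a : ℝ} (ha : 0 < a) :
    Tendsto (fun x : ℝ => Real.exp (-(a * x))) atTop (nhds 0) := by
  have h0 : Tendsto (fun x : ℝ => a * x) atTop atTop := tendsto_id.const_mul_atTop ha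
  exact Real.tendsto_exp_neg_atTop_nhds_zero.comp h0

lemma tendsto_aux_mul_exp {a : ℝ} (ha : 0 < a) :
    Tendsto (fun x : ℝ => x * Real.exp (-(a * x))) atTop (nhds 0) := by
  have h0 : Tendsto (fun x : ℝ => a * x) atTop atTop := tendsto_id.const_mul_atTop ha
  have h1 := (tendsto_pow_mul_exp_neg_atTop_nhds_zero 1).comp h0
  have h2 : (fun x : ℝ => x * Real.exp (-(a * x)))
      = fun x => (1/a) * ((a * x) ^ 1 * Real.exp (-(a * x))) := by
    funext x; field_simp
  rw [h2]
  simpa using h1.const_mul (1/a)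

lemma integrableOn_mul_exp_Ioi {a : ℝ} (c : ℝ) (ha : 0 < a) :
    IntegrableOn (fun x : ℝ => x * Real.exp (-(a * x))) (Ioi c) := by
  set K : ℝ := 2/a + |c| * Real.exp (a * |c| / 2) with hK
  have ha2 : 0 < a/2 := by linarith
  have hg : IntegrableOn (fun x : ℝ => K * Real.exp (-(a/2 * x))) (Ioi c) :=
    IntegrableOn.congr_fun ((exp_neg_integrableOn_Ioi c ha2).const_mul K)
      (fun x _ => by rw [neg_mul]) measurableSet_Ioi
  refine Integrable.mono' hg ?_ ?_
  · exact (Continuous.aestronglyMeasurable (by continuity)).restrict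
  · rw [ae_restrict_iff' measurableSet_Ioi]
    refine Eventually.of_forall fun x hx => ?_
    have hx' : c < x := hx
    have hb : |x| * Real.exp (-(a/2 * x)) ≤ K := by
      rcases le_or_gt 0 x with h | h
      · have h2 : x * Real.exp (-(a/2 * x)) ≤ 2/a := by
          have := mul_exp_neg_le ha2 h
          calc x * Real.exp (-(a/2 * x)) ≤ 1/(a/2) := this
            _ = 2/a := by field_simp
        rw [abs_of_nonneg h]
        have : (0:ℝ) ≤ |c| * Real.exp (a * |c| / 2) := by positivity
        linarith
      · have hxc : |x| ≤ |c| := by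
          rw [abs_of_neg h, abs_of_neg (lt_of_le_of_lt hx'.le h)]; linarith
        have h1 : Real.exp (-(a/2 * x)) ≤ Real.exp (a * |c| / 2) := by
          apply Real.exp_le_exp.2
          nlinarith [abs_of_neg h, hxc]
        have h2 : |x| * Real.exp (-(a/2 * x)) ≤ |c| * Real.exp (a * |c| / 2) :=
          mul_le_mul hxc h1 (Real.exp_pos _).le (abs_nonneg c)
        have : (0:ℝ) < 2/a := by positivity
        linarith
    calc ‖x * Real.exp (-(a * x))‖ = |x| * Real.exp (-(a * x)) := by
          rw [norm_mul, Real.norm_eq_abs, Real.norm_eq_abs, abs_of_pos (Real.exp_pos _)]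
      _ = |x| * Real.exp (-(a/2 * x)) * Real.exp (-(a/2 * x)) := by
          rw [mul_assoc, ← Real.exp_add]; ring_nf
      _ ≤ K * Real.exp (-(a/2 * x)) := mul_le_mul_of_nonneg_right hb (Real.exp_pos _).le

lemma integral_exp_tail {a : ℝ} (c : ℝ) (ha : 0 < a) :
    ∫ x in Ioi c, Real.exp (-(a * x)) = Real.exp (-(a * c)) / a := by
  have hderiv : ∀ x ∈ Ici c, HasDerivAt (fun x : ℝ => -(Real.exp (-(a * x)) / a))
      (Real.exp (-(a * x))) x := by
    intro x _
    have h1 : HasDerivAt (fun x : ℝ => -(a * x)) (-a) x := by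
      have h := ((hasDerivAt_id x).const_mul a).neg; rw [mul_one] at h; exact h
    have := ((h1.exp).div_const a).neg
    refine this.congr_deriv ?_
    field_simp
  have hint : IntegrableOn (fun x : ℝ => Real.exp (-(a * x))) (Ioi c) :=
    IntegrableOn.congr_fun (exp_neg_integrableOn_Ioi c ha)
      (fun x _ => by rw [neg_mul]) measurableSet_Ioi
  have htend : Tendsto (fun x : ℝ => -(Real.exp (-(a * x)) / a)) atTop (nhds 0) := by
    simpa using ((tendsto_aux_exp ha).div_const a).neg
  rw [integral_Ioi_of_hasDerivAt_of_tendsto' hderiv hint htend]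
  ring

lemma integral_mul_exp_tail {a : ℝ} (c : ℝ) (ha : 0 < a) :
    ∫ x in Ioi c, x * Real.exp (-(a * x)) = (c/a + 1/a^2) * Real.exp (-(a * c)) := by
  have hderiv : ∀ x ∈ Ici c, HasDerivAt (fun x : ℝ => -((x/a + 1/a^2) * Real.exp (-(a * x))))
      (x * Real.exp (-(a * x))) x := by
    intro x _
    have h1 : HasDerivAt (fun x : ℝ => -(a * x)) (-a) x := by
      have h := ((hasDerivAt_id x).const_mul a).neg; rw [mul_one] at h; exact h
    have h2 : HasDerivAt (fun x : ℝ => x/a + 1/a^2) (1/a) x :=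
      HasDerivAt.add_const (1/a^2) ((hasDerivAt_id x).div_const a)
    have := (h2.mul h1.exp).neg
    refine this.congr_deriv ?_
    field_simp
    ring
  have htend : Tendsto (fun x : ℝ => -((x/a + 1/a^2) * Real.exp (-(a * x)))) atTop (nhds 0) := by
    have h1 := ((tendsto_aux_mul_exp ha).const_mul (1/a)).add
      ((tendsto_aux_exp ha).const_mul (1/a^2))
    have h2 : (fun x : ℝ => -((x/a + 1/a^2) * Real.exp (-(a * x))))
        = fun x => -((1/a) * (x * Real.exp (-(a * x))) + (1/a^2) * Real.exp (-(a * x))) := by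
      funext x; ring
    rw [h2]
    simpa using h1.neg
  rw [integral_Ioi_of_hasDerivAt_of_tendsto' hderiv (integrableOn_mul_exp_Ioi c ha) htend]
  ring

lemma integral_exp_tail_Iic {a : ℝ} (c : ℝ) (ha : 0 < a) :
    ∫ x in Iic c, Real.exp (a * x) = Real.exp (a * c) / a := by
  calc ∫ x in Iic c, Real.exp (a * x)
      = ∫ x in Iic c, (fun y : ℝ => Real.exp (-(a * y))) (-x) := by
        congr 1; funext x; simp
    _ = ∫ y in Ioi (-c), Real.exp (-(a * y)) :=
        integral_comp_neg_Iic c (fun y : ℝ => Real.exp (-(a * y)))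
    _ = Real.exp (a * c) / a := by rw [integral_exp_tail _ ha]; ring_nf

lemma integral_mul_exp_tail_Iic {a : ℝ} (c : ℝ) (ha : 0 < a) :
    ∫ x in Iic c, x * Real.exp (a * x) = (c/a - 1/a^2) * Real.exp (a * c) := by
  calc ∫ x in Iic c, x * Real.exp (a * x)
      = ∫ x in Iic c, (fun y : ℝ => -(y * Real.exp (-(a * y)))) (-x) := by
        congr 1; funext x; simp
    _ = ∫ y in Ioi (-c), -(y * Real.exp (-(a * y))) :=
        integral_comp_neg_Iic c (fun y : ℝ => -(y * Real.exp (-(a * y))))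
    _ = (c/a - 1/a^2) * Real.exp (a * c) := by
        rw [integral_neg, integral_mul_exp_tail _ ha]; ring_nf

lemma integrable_exp_neg_abs {a : ℝ} (ha : 0 < a) :
    Integrable (fun x : ℝ => Real.exp (-(a * |x|))) := by
  have pos : IntegrableOn (fun x : ℝ => Real.exp (-(a * |x|))) (Ioi 0) :=
    IntegrableOn.congr_fun (exp_neg_integrableOn_Ioi 0 ha)
      (fun x hx => by rw [abs_of_pos hx, neg_mul]) measurableSet_Ioi
  rw [← integrableOn_univ, ← Set.Iio_union_Ici (a := (0:ℝ)), integrableOn_union,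
    integrableOn_Ici_iff_integrableOn_Ioi]
  refine ⟨?_, pos⟩
  rw [← (Measure.measurePreserving_neg (volume : Measure ℝ)).integrableOn_comp_preimage
      (Homeomorph.neg ℝ).measurableEmbedding]
  simp only [Function.comp_def, abs_neg, neg_preimage, neg_Iio, neg_zero]
  exact pos

lemma integrable_abs_mul_exp_neg_abs {a : ℝ} (ha : 0 < a) :
    Integrable (fun x : ℝ => |x| * Real.exp (-(a * |x|))) := by
  have ha2 : 0 < a/2 := by linarith
  refine Integrable.mono' ((integrable_exp_neg_abs ha2).const_mul (2/a))
    (Continuous.aestronglyMeasurable (by continuity)) (Eventually.of_forall fun x => ?_)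
  rw [norm_mul, Real.norm_eq_abs, Real.norm_eq_abs, abs_abs, abs_of_pos (Real.exp_pos _)]
  have h1 : |x| * Real.exp (-(a/2 * |x|)) ≤ 2/a := by
    have := mul_exp_neg_le ha2 (abs_nonneg x)
    calc |x| * Real.exp (-(a/2 * |x|)) ≤ 1/(a/2) := this
      _ = 2/a := by field_simp
  calc |x| * Real.exp (-(a * |x|))
      = |x| * Real.exp (-(a/2 * |x|)) * Real.exp (-(a/2 * |x|)) := by
        rw [mul_assoc, ← Real.exp_add]; ring_nf
    _ ≤ (2/a) * Real.exp (-(a/2 * |x|)) :=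
        mul_le_mul_of_nonneg_right h1 (Real.exp_pos _).le

lemma key_median (n : ℕ) (hn : 1 ≤ n) (Y : Fin n → ℝ) :
    Tendsto (fun b : ℝ =>
        (∫ μ : ℝ, μ * Real.exp (-(b * ∑ i, |Y i - μ|))) /
        (∫ μ : ℝ, Real.exp (-(b * ∑ i, |Y i - μ|))))
      (nhdsWithin 0 (Ioi 0)) (nhds ((∑ i, Y i) / n)) := by
  haveI : Nonempty (Fin n) := ⟨⟨0, by omega⟩⟩
  have hnR : (0:ℝ) < n := by exact_mod_cast hn
  have hnne : (n:ℝ) ≠ 0 := ne_of_gt hnR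
  set S : ℝ → ℝ := fun μ => ∑ i, |Y i - μ| with hS
  have hScont : Continuous S :=
    continuous_finset_sum _ fun i _ => (continuous_const.sub continuous_id).abs
  have hSnonneg : ∀ μ, 0 ≤ S μ := fun μ => Finset.sum_nonneg fun i _ => abs_nonneg _
  set T : ℝ := ∑ i, Y i with hT
  set C : ℝ := ∑ i, |Y i| with hC
  have hlow : ∀ μ : ℝ, (n:ℝ) * |μ| - C ≤ S μ := by
    intro μ
    have h1 : ∀ i ∈ Finset.univ, |μ| - |Y i| ≤ |Y i - μ| := fun i _ => by
      calc |μ| - |Y i| ≤ |μ - Y i| := abs_sub_abs_le_abs_sub _ _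
        _ = |Y i - μ| := abs_sub_comm _ _
    calc (n:ℝ) * |μ| - C = ∑ _i : Fin n, |μ| - ∑ i, |Y i| := by
          rw [Finset.sum_const, Finset.card_univ, Fintype.card_fin, nsmul_eq_mul]
      _ = ∑ i : Fin n, (|μ| - |Y i|) := by rw [Finset.sum_sub_distrib]
      _ ≤ S μ := Finset.sum_le_sum h1
  -- integrability
  have hexp_le : ∀ (b : ℝ), 0 < b → ∀ μ : ℝ,
      Real.exp (-(b * S μ)) ≤ Real.exp (b*C) * Real.exp (-(b*n*|μ|)) := by
    intro b hb μ
    rw [← Real.exp_add]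
    apply Real.exp_le_exp.2
    have := mul_le_mul_of_nonneg_left (hlow μ) hb.le
    nlinarith
  have hIg : ∀ (b : ℝ), 0 < b → Integrable (fun μ : ℝ => Real.exp (-(b * S μ))) := by
    intro b hb
    have hbn : 0 < b * n := by positivity
    refine Integrable.mono' ((integrable_exp_neg_abs hbn).const_mul (Real.exp (b*C)))
      (Continuous.aestronglyMeasurable
        (Real.continuous_exp.comp ((continuous_const.mul hScont).neg)))
      (Eventually.of_forall fun μ => ?_)
    rw [Real.norm_eq_abs, abs_of_pos (Real.exp_pos _)]
    exact hexp_le b hb μ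
  have hIh : ∀ (b : ℝ), 0 < b → Integrable (fun μ : ℝ => μ * Real.exp (-(b * S μ))) := by
    intro b hb
    have hbn : 0 < b * n := by positivity
    refine Integrable.mono' ((integrable_abs_mul_exp_neg_abs hbn).const_mul (Real.exp (b*C)))
      (Continuous.aestronglyMeasurable
        (continuous_id.mul (Real.continuous_exp.comp ((continuous_const.mul hScont).neg))))
      (Eventually.of_forall fun μ => ?_)
    rw [norm_mul, Real.norm_eq_abs, Real.norm_eq_abs, abs_of_pos (Real.exp_pos _)]
    calc |μ| * Real.exp (-(b * S μ)) ≤ |μ| * (Real.exp (b*C) * Real.exp (-(b*n*|μ|))) :=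
          mul_le_mul_of_nonneg_left (hexp_le b hb μ) (abs_nonneg μ)
      _ = Real.exp (b*C) * (|μ| * Real.exp (-(b*n*|μ|))) := by ring
  -- min and max
  set m : ℝ := Finset.univ.inf' Finset.univ_nonempty Y with hm
  set M : ℝ := Finset.univ.sup' Finset.univ_nonempty Y with hM
  have hmY : ∀ i, m ≤ Y i := fun i => Finset.inf'_le _ (Finset.mem_univ i)
  have hYM : ∀ i, Y i ≤ M := fun i => Finset.le_sup' _ (Finset.mem_univ i)
  have hmM : m ≤ M := le_trans (hmY (Classical.arbitrary _)) (hYM _)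
  have hS_hi : ∀ μ : ℝ, M < μ → S μ = n * μ - T := by
    intro μ hμ
    calc S μ = ∑ i : Fin n, (μ - Y i) := Finset.sum_congr rfl fun i _ => by
          rw [abs_of_nonpos (by linarith [hYM i])]; ring
      _ = ∑ _i : Fin n, μ - ∑ i, Y i := by rw [Finset.sum_sub_distrib]
      _ = n * μ - T := by
          rw [Finset.sum_const, Finset.card_univ, Fintype.card_fin, nsmul_eq_mul, hT]
  have hS_lo : ∀ μ : ℝ, μ ≤ m → S μ = T - n * μ := by
    intro μ hμ
    calc S μ = ∑ i : Fin n, (Y i - μ) := Finset.sum_congr rfl fun i _ => by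
          rw [abs_of_nonneg (by linarith [hmY i])]
      _ = ∑ i, Y i - ∑ _i : Fin n, μ := by rw [Finset.sum_sub_distrib]
      _ = T - n * μ := by
          rw [Finset.sum_const, Finset.card_univ, Fintype.card_fin, nsmul_eq_mul, hT]
  set α : ℝ := T - n*M with hα
  set β : ℝ := n*m - T with hβ
  set u : ℝ → ℝ := fun b => Real.exp (α*b) * (M/n*b + 1/n^2)
      + Real.exp (β*b) * (m/n*b - 1/n^2) with hu
  set v : ℝ → ℝ := fun b => Real.exp (α*b)/n + Real.exp (β*b)/n with hv
  set I0 : ℝ → ℝ := fun b => ∫ μ in Ioc m M, Real.exp (-(b * S μ)) with hI0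
  set I1 : ℝ → ℝ := fun b => ∫ μ in Ioc m M, μ * Real.exp (-(b * S μ)) with hI1
  -- main decomposition
  have main : ∀ b : ℝ, 0 < b →
      (∫ μ : ℝ, μ * Real.exp (-(b * S μ))) / (∫ μ : ℝ, Real.exp (-(b * S μ)))
      = (u b / b + b * I1 b) / (v b + b * I0 b) := by
    intro b hb
    have hbn : 0 < b * n := by positivity
    have hsplit : ∀ f : ℝ → ℝ, Integrable f →
        ∫ μ, f μ = (∫ μ in Iic m, f μ) + (∫ μ in Ioc m M, f μ) + (∫ μ in Ioi M, f μ) := by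
      intro f hf
      have hd : Disjoint (Iic m) (Ioc m M) := Iic_disjoint_Ioc (le_refl m)
      have ha : IntegrableOn f (Iic m) := hf.integrableOn
      have hb : IntegrableOn f (Ioc m M) := hf.integrableOn
      have h1 := intervalIntegral.integral_Iic_add_Ioi (b := M) (f := f) (μ := volume)
        hf.integrableOn hf.integrableOn
      have h2 := setIntegral_union hd measurableSet_Ioc ha hb
      rw [Set.Iic_union_Ioc_eq_Iic hmM] at h2
      rw [← h1, h2]
    have e_hi1 : ∫ μ in Ioi M, μ * Real.exp (-(b * S μ))
        = Real.exp (α*b) * (M/n*b + 1/n^2) / b^2 := by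
      have heq : EqOn (fun μ : ℝ => μ * Real.exp (-(b * S μ)))
          (fun μ : ℝ => Real.exp (b*T) * (μ * Real.exp (-(b*n*μ)))) (Ioi M) := by
        intro μ hμ
        simp only
        rw [hS_hi μ hμ, show Real.exp (b*T) * (μ * Real.exp (-(b*n*μ)))
            = μ * (Real.exp (b*T) * Real.exp (-(b*n*μ))) from by ring, ← Real.exp_add]
        congr 2
        ring
      rw [setIntegral_congr_fun measurableSet_Ioi heq, integral_const_mul,
        integral_mul_exp_tail M hbn, show Real.exp (b*T) * ((M/(b*n) + 1/(b*n)^2)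
          * Real.exp (-(b*n*M))) = (Real.exp (b*T) * Real.exp (-(b*n*M)))
          * (M/(b*n) + 1/(b*n)^2) from by ring, ← Real.exp_add,
        show b*T + -(b*n*M) = α*b from by rw [hα]; ring]
      field_simp [hb.ne', hnne]
    have e_lo1 : ∫ μ in Iic m, μ * Real.exp (-(b * S μ))
        = Real.exp (β*b) * (m/n*b - 1/n^2) / b^2 := by
      have heq : EqOn (fun μ : ℝ => μ * Real.exp (-(b * S μ)))
          (fun μ : ℝ => Real.exp (-(b*T)) * (μ * Real.exp (b*n*μ))) (Iic m) := by
        intro μ hμ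
        simp only
        rw [hS_lo μ hμ, show Real.exp (-(b*T)) * (μ * Real.exp (b*n*μ))
            = μ * (Real.exp (-(b*T)) * Real.exp (b*n*μ)) from by ring, ← Real.exp_add]
        congr 2
        ring
      rw [setIntegral_congr_fun measurableSet_Iic heq, integral_const_mul,
        integral_mul_exp_tail_Iic m hbn, show Real.exp (-(b*T)) * ((m/(b*n) - 1/(b*n)^2)
          * Real.exp (b*n*m)) = (Real.exp (-(b*T)) * Real.exp (b*n*m))
          * (m/(b*n) - 1/(b*n)^2) from by ring, ← Real.exp_add,
        show -(b*T) + b*n*m = β*b from by rw [hβ]; ring]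
      field_simp [hb.ne', hnne]
    have e_hi0 : ∫ μ in Ioi M, Real.exp (-(b * S μ)) = Real.exp (α*b) / (n*b) := by
      have heq : EqOn (fun μ : ℝ => Real.exp (-(b * S μ)))
          (fun μ : ℝ => Real.exp (b*T) * Real.exp (-(b*n*μ))) (Ioi M) := by
        intro μ hμ
        simp only
        rw [hS_hi μ hμ, ← Real.exp_add]
        congr 1
        ring
      rw [setIntegral_congr_fun measurableSet_Ioi heq, integral_const_mul,
        integral_exp_tail M hbn, show Real.exp (b*T) * (Real.exp (-(b*n*M)) / (b*n))
          = (Real.exp (b*T) * Real.exp (-(b*n*M))) / (b*n) from by ring, ← Real.exp_add,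
        show b*T + -(b*n*M) = α*b from by rw [hα]; ring]
      ring
    have e_lo0 : ∫ μ in Iic m, Real.exp (-(b * S μ)) = Real.exp (β*b) / (n*b) := by
      have heq : EqOn (fun μ : ℝ => Real.exp (-(b * S μ)))
          (fun μ : ℝ => Real.exp (-(b*T)) * Real.exp (b*n*μ)) (Iic m) := by
        intro μ hμ
        simp only
        rw [hS_lo μ hμ, ← Real.exp_add]
        congr 1
        ring
      rw [setIntegral_congr_fun measurableSet_Iic heq, integral_const_mul,
        integral_exp_tail_Iic m hbn, show Real.exp (-(b*T)) * (Real.exp (b*n*m) / (b*n))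
          = (Real.exp (-(b*T)) * Real.exp (b*n*m)) / (b*n) from by ring, ← Real.exp_add,
        show -(b*T) + b*n*m = β*b from by rw [hβ]; ring]
      ring
    have hH : (∫ μ : ℝ, μ * Real.exp (-(b * S μ))) = u b / b^2 + I1 b := by
      rw [hsplit _ (hIh b hb), e_hi1, e_lo1, hu, hI1]
      simp only
      ring
    have hG : (∫ μ : ℝ, Real.exp (-(b * S μ))) = v b / b + I0 b := by
      rw [hsplit _ (hIg b hb), e_hi0, e_lo0, hv, hI0]
      simp only
      field_simp
      ring
    rw [hH, hG, show (u b / b^2 + I1 b) / (v b / b + I0 b)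
      = (b * (u b / b^2 + I1 b)) / (b * (v b / b + I0 b)) from
        (mul_div_mul_left _ _ hb.ne').symm]
    congr 1
    · field_simp
    · field_simp
  -- bounds on middle integrals
  have hexp_one : ∀ (b : ℝ), 0 < b → ∀ μ : ℝ, Real.exp (-(b * S μ)) ≤ 1 := by
    intro b hb μ
    rw [Real.exp_le_one_iff]
    have := mul_nonneg hb.le (hSnonneg μ)
    linarith
  have hbound0 : ∀ b : ℝ, 0 < b → |I0 b| ≤ 1 * (volume (Ioc m M)).toReal := by
    intro b hb
    rw [← Real.norm_eq_abs, hI0]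
    refine norm_setIntegral_le_of_norm_le_const_ae' measure_Ioc_lt_top
      (Eventually.of_forall fun μ _ => ?_)
    rw [Real.norm_eq_abs, abs_of_pos (Real.exp_pos _)]
    exact hexp_one b hb μ
  have hbound1 : ∀ b : ℝ, 0 < b → |I1 b| ≤ (|m| + |M|) * (volume (Ioc m M)).toReal := by
    intro b hb
    rw [← Real.norm_eq_abs, hI1]
    refine norm_setIntegral_le_of_norm_le_const_ae' measure_Ioc_lt_top
      (Eventually.of_forall fun μ hμ => ?_)
    rw [norm_mul, Real.norm_eq_abs, Real.norm_eq_abs, abs_of_pos (Real.exp_pos _)]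
    have habs : |μ| ≤ |m| + |M| := by
      rw [abs_le]
      constructor
      · have := neg_abs_le m
        have := abs_nonneg M
        have := hμ.1
        linarith
      · have := le_abs_self M
        have := abs_nonneg m
        have := hμ.2
        linarith
    calc |μ| * Real.exp (-(b * S μ)) ≤ (|m| + |M|) * 1 :=
          mul_le_mul habs (hexp_one b hb μ) (Real.exp_pos _).le
            (by positivity)
      _ = |m| + |M| := mul_one _
  -- limits
  have habs_tendsto : Tendsto (fun b : ℝ => |b|) (nhdsWithin 0 (Ioi 0)) (nhds 0) :=
    (continuous_abs.tendsto' 0 0 abs_zero).mono_left nhdsWithin_le_nhds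
  have hzero0 : Tendsto (fun b => b * I0 b) (nhdsWithin 0 (Ioi 0)) (nhds 0) := by
    have hK : Tendsto (fun b : ℝ => |b| * (1 * (volume (Ioc m M)).toReal))
        (nhdsWithin 0 (Ioi 0)) (nhds 0) := by
      simpa using habs_tendsto.mul_const (1 * (volume (Ioc m M)).toReal)
    refine squeeze_zero_norm' ?_ hK
    filter_upwards [self_mem_nhdsWithin] with b hb
    rw [norm_mul, Real.norm_eq_abs, Real.norm_eq_abs]
    exact mul_le_mul_of_nonneg_left (hbound0 b hb) (abs_nonneg b)
  have hzero1 : Tendsto (fun b => b * I1 b) (nhdsWithin 0 (Ioi 0)) (nhds 0) := by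
    have hK : Tendsto (fun b : ℝ => |b| * ((|m| + |M|) * (volume (Ioc m M)).toReal))
        (nhdsWithin 0 (Ioi 0)) (nhds 0) := by
      simpa using habs_tendsto.mul_const ((|m| + |M|) * (volume (Ioc m M)).toReal)
    refine squeeze_zero_norm' ?_ hK
    filter_upwards [self_mem_nhdsWithin] with b hb
    rw [norm_mul, Real.norm_eq_abs, Real.norm_eq_abs]
    exact mul_le_mul_of_nonneg_left (hbound1 b hb) (abs_nonneg b)
  have hu0 : u 0 = 0 := by
    rw [hu]
    simp only [mul_zero, zero_add, Real.exp_zero, one_mul, zero_sub, zero_mul]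
    ring
  have huderiv : HasDerivAt u (2*T/n^2) 0 := by
    have h1 : HasDerivAt (fun b : ℝ => α*b) (α*1) 0 := (hasDerivAt_id (0:ℝ)).const_mul α
    have h1' : HasDerivAt (fun b : ℝ => β*b) (β*1) 0 := (hasDerivAt_id (0:ℝ)).const_mul β
    have h2 : HasDerivAt (fun b : ℝ => M/n*b + 1/n^2) (M/n*1) 0 :=
      ((hasDerivAt_id (0:ℝ)).const_mul (M/n)).add_const (1/(n:ℝ)^2)
    have h2' : HasDerivAt (fun b : ℝ => m/n*b - 1/n^2) (m/n*1) 0 :=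
      ((hasDerivAt_id (0:ℝ)).const_mul (m/n)).sub_const (1/(n:ℝ)^2)
    have := (h1.exp.mul h2).add (h1'.exp.mul h2')
    rw [hu]
    refine this.congr_deriv ?_
    simp only [mul_zero, Real.exp_zero, mul_one, zero_add, one_mul, zero_sub]
    rw [hα, hβ]
    field_simp
    ring
  have huslope : Tendsto (fun b => u b / b) (nhdsWithin 0 (Ioi 0)) (nhds (2*T/n^2)) := by
    have hs := hasDerivAt_iff_tendsto_slope.1 huderiv
    have hs2 : Tendsto (slope u 0) (nhdsWithin 0 (Ioi 0)) (nhds (2*T/n^2)) :=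
      hs.mono_left (nhdsWithin_mono 0 (fun x hx => ne_of_gt hx))
    refine hs2.congr' ?_
    filter_upwards [self_mem_nhdsWithin] with b _
    rw [slope_def_field, hu0]
    simp [div_eq_mul_inv]
  have hvc : Continuous v := by
    rw [hv]
    exact ((Real.continuous_exp.comp (continuous_const.mul continuous_id)).div_const n).add
      ((Real.continuous_exp.comp (continuous_const.mul continuous_id)).div_const n)
  have hv00 : v 0 = 2/n := by
    rw [hv]
    simp only [mul_zero, Real.exp_zero]
    ring
  have hvt : Tendsto (fun b => v b + b*I0 b) (nhdsWithin 0 (Ioi 0)) (nhds (2/n)) := by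
    have h1 : Tendsto v (nhdsWithin 0 (Ioi 0)) (nhds (2/n)) := by
      rw [← hv00]
      exact (hvc.tendsto 0).mono_left nhdsWithin_le_nhds
    simpa using h1.add hzero0
  have hht : Tendsto (fun b => u b / b + b*I1 b) (nhdsWithin 0 (Ioi 0)) (nhds (2*T/n^2)) := by
    simpa using huslope.add hzero1
  have hratio := hht.div hvt (by positivity : (2:ℝ)/n ≠ 0)
  have hval : (2*T/n^2)/(2/n) = T/n := by field_simp
  rw [hval] at hratio
  refine Tendsto.congr' ?_ hratio
  filter_upwards [self_mem_nhdsWithin] with b hb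
  exact (main b hb).symm

/-- For the median (`τ = 1/2`), as `λ → ∞` the flat-prior posterior mean
converges to the sample mean. -/
theorem posterior_mean_median_tendsto_sample_mean
    (n : ℕ) (hn : 1 ≤ n) (Y : Fin n → ℝ) :
    Tendsto (fun lam : ℝ =>
        (∫ μ : ℝ, μ * Real.exp (-lam⁻¹ * ∑ i, rho (1/2) (Y i - μ))) /
        (∫ μ : ℝ, Real.exp (-lam⁻¹ * ∑ i, rho (1/2) (Y i - μ))))
      atTop (nhds ((∑ i, Y i) / n)) := by
  have heq : ∀ lam μ : ℝ, -lam⁻¹ * ∑ i, rho (1/2) (Y i - μ)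
      = -((lam⁻¹/2) * ∑ i, |Y i - μ|) := by
    intro lam μ
    rw [show (∑ i, rho (1/2) (Y i - μ)) = (∑ i, |Y i - μ|)/2 from by
      rw [Finset.sum_div]
      exact Finset.sum_congr rfl fun i _ => rho_half _]
    ring
  have hcomp : Tendsto (fun lam : ℝ => lam⁻¹/2) atTop (nhdsWithin 0 (Ioi 0)) := by
    rw [tendsto_nhdsWithin_iff]
    constructor
    · simpa using (tendsto_inv_atTop_zero : Tendsto (fun x : ℝ => x⁻¹) atTop (nhds 0)).div_const 2
    · filter_upwards [eventually_gt_atTop (0:ℝ)] with lam hlam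
      exact mem_Ioi.2 (by positivity)
  refine ((key_median n hn Y).comp hcomp).congr fun lam => ?_
  simp only [Function.comp_apply, heq]
end
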